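/- For any integer n ≥ 3 and any word ω on the ordered alphabet {a, b}, there exists a regular sequence ν on [n] = {1, …, n} whose restriction ν_{{1,2}} is order equivalent to ω if and only if ω is balanced. -/

import Mathlib

noncomputable section

/-- Two words (over possibly different ordered alphabets) are order equivalent:
same length, and letters in corresponding positions compare the same way. -/
def OrdEquiv {α β : Type*} [LT α] [LT β] (u : List α) (v : List β) : Prop :=
  ∃ h : u.length = v.length, ∀ s t : Fin u.length,
    (u.get s < u.get t ↔ v.get (Fin.cast h s) < v.get (Fin.cast h t))

/-- A regular sequence on `[n] = {1, …, n}`: a word on `[n]` (with `n ≥ 3`) whose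
restrictions to any two 2-element subsets of `[n]` are order equivalent. -/
def IsRegularSeq (n : ℕ) (w : List ℕ) : Prop :=
  3 ≤ n ∧ (∀ x ∈ w, x ∈ Finset.Icc 1 n) ∧
    ∀ X Y : Finset ℕ, X ⊆ Finset.Icc 1 n → Y ⊆ Finset.Icc 1 n → X.card = 2 → Y.card = 2 →
      OrdEquiv (w.filter (· ∈ X)) (w.filter (· ∈ Y))

/-- Balanced words on the two-letter ordered alphabet `{a ≺ b}`: concatenations of
balanced blocks `a^r b^r` and `b^r a^r` with `r ≥ 1`. -/
inductive BalancedOn {α : Type*} (a b : α) : List α → Prop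
  | nil : BalancedOn a b []
  | lo (r : ℕ) (w : List α) (hr : 0 < r) (hw : BalancedOn a b w) :
      BalancedOn a b (List.replicate r a ++ List.replicate r b ++ w)
  | hi (r : ℕ) (w : List α) (hr : 0 < r) (hw : BalancedOn a b w) :
      BalancedOn a b (List.replicate r b ++ List.replicate r a ++ w)

/-- `HasBlockSizes a b w s`: the word `w` factors into balanced blocks on `{a ≺ b}`
whose sizes are given, in order, by the list `s`. -/
inductive HasBlockSizes {α : Type*} (a b : α) : List α → List ℕ → Prop
  | nil : HasBlockSizes a b [] []
  | lo (r : ℕ) (w : List α) (s : List ℕ) (hr : 0 < r) (hw : HasBlockSizes a b w s) :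
      HasBlockSizes a b (List.replicate r a ++ List.replicate r b ++ w) (r :: s)
  | hi (r : ℕ) (w : List α) (s : List ℕ) (hr : 0 < r) (hw : HasBlockSizes a b w s) :
      HasBlockSizes a b (List.replicate r b ++ List.replicate r a ++ w) (r :: s)

/-- The exponent sequence of the letter `u` in a word: the list of lengths of the
maximal runs of consecutive `u`'s. -/
def expSeq {α : Type*} [DecidableEq α] (u : α) : List α → List ℕ
  | [] => []
  | x :: xs =>
      let s := expSeq u xs
      if x = u then
        match xs with
        | [] => [1]
        | y :: _ => if y = u then (s.headD 0 + 1) :: s.tail else 1 :: s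
      else s

/-- `Refines s t`: the sequence `s` is a refinement of `t`, i.e. `s` splits into
consecutive nonempty groups whose sums are the entries of `t`. -/
inductive Refines : List ℕ → List ℕ → Prop
  | nil : Refines [] []
  | cons (g s t : List ℕ) (hg : g ≠ []) (h : Refines s t) :
      Refines (g ++ s) (g.sum :: t)

/-- `IsOccPos w u i p`: the (1-based) position of the `i`-th occurrence of the letter
`u` in `w` is `p` (that is, `|w(u,i)| = p`). -/
def IsOccPos {α : Type*} [DecidableEq α] (w : List α) (u : α) (i p : ℕ) : Prop :=
  1 ≤ p ∧ p ≤ w.length ∧ w.getD (p - 1) u = u ∧ (w.take p).count u = i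


/-!
If `ν` is regular, its restrictions to `{1, 2}`, `{2, 3}` and `{1, 3}` are all `w` with the
letters renamed, so "the `i`-th `a` precedes the `j`-th `b`" means the same in `w` as for each of
these pairs in `ν`. A cyclic triple `a_i < b_j`, `a_j < b_k`, `b_k < a_i` in `w` would thus give a
cycle `1_i < 2_j < 3_k < 1_i` in `ν`. A word with as many `a`s as `b`s and no cyclic triple is
balanced: if it starts with `c^r d^s` followed by `c` or nothing, then `s < r` is impossible
(`c_{r+1} < d_{s+1}`, `c_{s+1} < d_s`, `d_s < c_{r+1}` is a cyclic triple, or the counts differ),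
so `c^r d^r` splits off. Conversely, a balanced word is realised blockwise, `a^r b^r` by
`1^r 2^r ⋯ n^r` and `b^r a^r` by `n^r ⋯ 2^r 1^r`.
-/

theorem OrdEquiv.symm {α β : Type*} [LT α] [LT β] {u : List α} {v : List β}
    (h : OrdEquiv u v) : OrdEquiv v u := by
  obtain ⟨hl, H⟩ := h
  exact ⟨hl.symm, fun s t => by simpa using (H (Fin.cast hl.symm s) (Fin.cast hl.symm t)).symm⟩

theorem OrdEquiv.trans {α β γ : Type*} [LT α] [LT β] [LT γ] {u : List α} {v : List β}
    {z : List γ} (h₁ : OrdEquiv u v) (h₂ : OrdEquiv v z) : OrdEquiv u z := by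
  obtain ⟨hl₁, H₁⟩ := h₁
  obtain ⟨hl₂, H₂⟩ := h₂
  exact ⟨hl₁.trans hl₂, fun s t => (H₁ s t).trans (H₂ _ _)⟩

theorem ordEquiv_map_self {α β : Type*} [LinearOrder α] [Preorder β] {f : α → β}
    (hf : StrictMono f) (l : List α) : OrdEquiv (l.map f) l :=
  ⟨l.length_map f, fun s t => by simpa using hf.lt_iff_lt⟩

theorem strictMono_cond {α : Type*} [Preorder α] {x y : α} (hxy : x < y) :
    StrictMono (cond · y x) := by
  intro a b hab
  obtain ⟨rfl, rfl⟩ : a = false ∧ b = true := Bool.lt_iff.mp hab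
  exact hxy

theorem cond_injective {α : Type*} {x y : α} (hxy : x ≠ y) : Function.Injective (cond · y x) := by
  intro a b h
  cases a <;> cases b <;> simp_all [eq_comm]

theorem eq_map_cond_of_ordEquiv {α : Type*} [LinearOrder α] {u : List α} {w : List Bool}
    {x y : α} (hxy : x < y) (hu : ∀ z ∈ u, z = x ∨ z = y) (hx : x ∈ u) (hy : y ∈ u)
    (h : OrdEquiv u w) : u = w.map (cond · y x) := by
  obtain ⟨hl, H⟩ := h
  obtain ⟨s, hs, rfl⟩ := List.getElem_of_mem hx
  obtain ⟨t, ht, rfl⟩ := List.getElem_of_mem hy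
  refine List.ext_getElem (by simp [hl]) fun p hp _ => ?_
  rw [List.getElem_map]
  rcases hu _ (List.getElem_mem hp) with hpx | hpy
  · have := (H ⟨p, hp⟩ ⟨t, ht⟩).mp (by simpa [hpx] using hxy)
    simp_all [Bool.lt_iff]
  · have := (H ⟨s, hs⟩ ⟨p, hp⟩).mp (by simpa [hpy] using hxy)
    simp_all [Bool.lt_iff]

section OccBefore

variable {α : Type*} [DecidableEq α]

/-- The `i`-th occurrence of `x` in `v` precedes the `j`-th occurrence of `y`. -/
def OccBefore (v : List α) (x : α) (i : ℕ) (y : α) (j : ℕ) : Prop :=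
  ∃ p, p <+: v ∧ i ≤ p.count x ∧ p.count y < j

theorem OccBefore.asymm {v : List α} {x y : α} {i j : ℕ} (h : OccBefore v x i y j) :
    ¬ OccBefore v y j x i := by
  rintro ⟨q, hq, hqy, hqx⟩
  obtain ⟨p, hp, hpx, hpy⟩ := h
  rcases List.prefix_or_prefix_of_prefix hp hq with hpq | hqp
  · exact absurd (hpx.trans (hpq.sublist.count_le x)) (by omega)
  · exact absurd (hqy.trans (hqp.sublist.count_le y)) (by omega)

theorem OccBefore.trans {v : List α} {x y z : α} {i j k : ℕ} (h₁ : OccBefore v x i y j)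
    (h₂ : OccBefore v y j z k) : OccBefore v x i z k := by
  obtain ⟨p, hp, hpx, hpy⟩ := h₁
  obtain ⟨q, hq, hqy, hqz⟩ := h₂
  rcases List.prefix_or_prefix_of_prefix hp hq with hpq | hqp
  · exact ⟨p, hp, hpx, (hpq.sublist.count_le z).trans_lt hqz⟩
  · exact absurd (hqy.trans (hqp.sublist.count_le y)) (by omega)

theorem OccBefore.append_left {v : List α} {x y : α} {i j : ℕ} (u : List α)
    (h : OccBefore v x i y j) : OccBefore (u ++ v) x (u.count x + i) y (u.count y + j) := by
  obtain ⟨p, hp, hpx, hpy⟩ := h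
  exact ⟨u ++ p, List.prefix_append_right_inj u |>.mpr hp, by simp [hpx], by simp [hpy]⟩

theorem occBefore_filter_iff (v : List α) {f : α → Bool} {x y : α} (hx : f x) (hy : f y)
    (i j : ℕ) : OccBefore (v.filter f) x i y j ↔ OccBefore v x i y j := by
  constructor
  · rintro ⟨q, hq, hqx, hqy⟩
    obtain ⟨p, hp, rfl⟩ := List.prefix_filter_iff.mp hq
    exact ⟨p, hp, by rwa [List.count_filter hx] at hqx, by rwa [List.count_filter hy] at hqy⟩
  · rintro ⟨p, hp, hpx, hpy⟩
    exact ⟨p.filter f, hp.filter f, by rwa [List.count_filter hx],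
      by rwa [List.count_filter hy]⟩

theorem occBefore_map_iff {β : Type*} [DecidableEq β] (v : List α) {f : α → β}
    (hf : f.Injective) (x y : α) (i j : ℕ) :
    OccBefore (v.map f) (f x) i (f y) j ↔ OccBefore v x i y j := by
  constructor
  · rintro ⟨q, hq, hqx, hqy⟩
    obtain ⟨p, hp, rfl⟩ := List.prefix_map_iff.mp hq
    exact ⟨p, hp, by rwa [List.count_map_of_injective _ _ hf] at hqx,
      by rwa [List.count_map_of_injective _ _ hf] at hqy⟩
  · rintro ⟨p, hp, hpx, hpy⟩
    exact ⟨p.map f, hp.map f, by rwa [List.count_map_of_injective _ _ hf],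
      by rwa [List.count_map_of_injective _ _ hf]⟩

def CyclicTriple (w : List α) (a b : α) : Prop :=
  ∃ i j k, OccBefore w a i b j ∧ OccBefore w a j b k ∧ OccBefore w b k a i

theorem CyclicTriple.append_left {v : List α} {a b : α} (h : CyclicTriple v a b) (u : List α)
    (hu : u.count a = u.count b) : CyclicTriple (u ++ v) a b := by
  obtain ⟨i, j, k, h₁, h₂, h₃⟩ := h
  refine ⟨u.count a + i, u.count a + j, u.count a + k, ?_, ?_, ?_⟩
  · simpa [hu] using h₁.append_left u
  · simpa [hu] using h₂.append_left u
  · simpa [hu] using h₃.append_left u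

theorem cyclicTriple_replicate_append_replicate {a b : α} (hab : a ≠ b) {r s : ℕ} (hs : 0 < s)
    (hsr : s < r) (t : List α) :
    CyclicTriple (List.replicate r a ++ List.replicate s b ++ a :: t) a b := by
  set u := List.replicate r a ++ List.replicate s b
  have hu : u <+: u ++ a :: t := List.prefix_append _ _
  have hsu : List.replicate (s + 1) a <+: u := by
    obtain ⟨q, hq⟩ := Nat.exists_eq_add_of_le hsr
    rw [show u = List.replicate (s + 1) a ++ (List.replicate q a ++ List.replicate s b) by
      simp [u, hq, List.replicate_add]]
    exact List.prefix_append _ _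
  refine ⟨r + 1, s + 1, s, ⟨u ++ [a], ?_, ?_, ?_⟩, ⟨_, hsu.trans hu, ?_, ?_⟩, ⟨u, hu, ?_, ?_⟩⟩
  all_goals simp [u, List.count_replicate, hab, Ne.symm hab, hs]

end OccBefore

theorem List.exists_eq_replicate_append_head?_ne {α : Type*} (l : List α) (c : α) :
    ∃ r t, l = List.replicate r c ++ t ∧ t.head? ≠ some c := by
  induction l with
  | nil => exact ⟨0, [], rfl, by simp⟩
  | cons x l ih =>
    by_cases hx : x = c
    · obtain ⟨r, t, rfl, ht⟩ := ih
      exact ⟨r + 1, t, by simp [hx, List.replicate_succ], ht⟩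
    · exact ⟨0, x :: l, rfl, by simpa using hx⟩

theorem count_replicate_append_replicate_not (r : ℕ) (c a : Bool) :
    (List.replicate r c ++ List.replicate r (!c)).count a = r := by
  cases a <;> cases c <;> simp [List.count_replicate]

theorem balancedOn_of_count_eq_of_not_cyclicTriple (w : List Bool)
    (hcount : w.count false = w.count true) (hw : ∀ a, ¬ CyclicTriple w a (!a)) :
    BalancedOn false true w := by
  induction hlen : w.length using Nat.strong_induction_on generalizing w with | _ N ih =>
  rcases w with _ | ⟨c, w₀⟩
  · exact .nil
  obtain ⟨r, t₁, rfl, ht₁⟩ := List.exists_eq_replicate_append_head?_ne w₀ c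
  obtain ⟨s, t₂, rfl, ht₂⟩ := List.exists_eq_replicate_append_head?_ne t₁ (!c)
  have hw' : c :: (List.replicate r c ++ (List.replicate s (!c) ++ t₂)) =
      List.replicate (r + 1) c ++ List.replicate s (!c) ++ t₂ := by
    simp [List.replicate_succ]
  rw [hw'] at hcount hw hlen ⊢
  rcases le_or_gt (r + 1) s with hrs | hsr
  · obtain ⟨q, rfl⟩ := Nat.exists_eq_add_of_le hrs
    have hsplit : List.replicate (r + 1) c ++ List.replicate (r + 1 + q) (!c) ++ t₂ =
        (List.replicate (r + 1) c ++ List.replicate (r + 1) (!c)) ++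
          (List.replicate q (!c) ++ t₂) := by
      simp [List.replicate_add]
    rw [hsplit] at hcount hw hlen ⊢
    set u := List.replicate (r + 1) c ++ List.replicate (r + 1) (!c)
    have hu : ∀ a, u.count a = r + 1 := count_replicate_append_replicate_not (r + 1) c
    have hrest : BalancedOn false true (List.replicate q (!c) ++ t₂) := by
      refine ih _ ?_ _ ?_ (fun a ha => hw a (ha.append_left u (by rw [hu, hu]))) rfl
      · simp only [u, List.length_append, List.length_replicate] at hlen ⊢
        omega
      · simpa only [List.count_append, hu, Nat.add_left_cancel_iff] using hcount
    cases c
    · exact .lo _ _ r.succ_pos hrest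
    · exact .hi _ _ r.succ_pos hrest
  · exfalso
    rcases t₂ with _ | ⟨e, t₃⟩
    · cases c <;> simp [List.count_replicate] at hcount <;> omega
    rcases s with _ | s
    · cases c <;> cases e <;> simp_all
    obtain rfl : c = e := by cases c <;> cases e <;> simp_all
    have := cyclicTriple_replicate_append_replicate (Bool.not_ne_self c).symm s.succ_pos hsr t₃
    exact hw c (by simpa using this)

section PairRestriction

variable {α : Type*} [DecidableEq α]

theorem length_filter_mem_pair {x y : α} (hxy : x ≠ y) (l : List α) :
    (l.filter (· ∈ ({x, y} : Finset α))).length = l.count x + l.count y := by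
  induction l with
  | nil => rfl
  | cons a l ih =>
    by_cases hx : a = x <;> by_cases hy : a = y <;> simp_all <;>
      omega

theorem occBefore_iff_of_filter_eq_map {ν : List α} {w : List Bool} {x y : α} (hxy : x ≠ y)
    (h : ν.filter (· ∈ ({x, y} : Finset α)) = w.map (cond · y x)) (a b : Bool) (i j : ℕ) :
    OccBefore ν (cond a y x) i (cond b y x) j ↔ OccBefore w a i b j := by
  rw [← occBefore_filter_iff ν (f := (· ∈ ({x, y} : Finset α))) (by cases a <;> simp)
    (by cases b <;> simp), h, occBefore_map_iff w (cond_injective hxy)]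

theorem count_eq_of_filter_eq_map {ν : List α} {w : List Bool} {x y : α} (hxy : x ≠ y)
    (h : ν.filter (· ∈ ({x, y} : Finset α)) = w.map (cond · y x)) (b : Bool) :
    w.count b = ν.count (cond b y x) := by
  rw [← List.count_map_of_injective _ _ (cond_injective hxy), ← h,
    List.count_filter (by cases b <;> simp)]

theorem not_cyclicTriple_of_filter_eq_map {ν : List α} {w : List Bool} {x y z : α}
    (hxy : x ≠ y) (hyz : y ≠ z) (hxz : x ≠ z)
    (hν_xy : ν.filter (· ∈ ({x, y} : Finset α)) = w.map (cond · y x))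
    (hν_yz : ν.filter (· ∈ ({y, z} : Finset α)) = w.map (cond · z y))
    (hν_xz : ν.filter (· ∈ ({x, z} : Finset α)) = w.map (cond · z x)) (a : Bool) :
    ¬ CyclicTriple w a (!a) := by
  rintro ⟨i, j, k, hij, hjk, hki⟩
  have xy := occBefore_iff_of_filter_eq_map hxy hν_xy
  have yz := occBefore_iff_of_filter_eq_map hyz hν_yz
  have xz := occBefore_iff_of_filter_eq_map hxz hν_xz
  cases a
  · exact (((xy _ _ i j).mpr hij).trans ((yz _ _ j k).mpr hjk)).asymm
      ((xz _ _ k i).mpr hki)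
  · exact (((yz _ _ i j).mpr hij).trans ((xy _ _ j k).mpr hjk)).asymm
      ((xz _ _ k i).mpr hki)

end PairRestriction

theorem filter_pair_eq_map_of_ordEquiv {α : Type*} [LinearOrder α] {ν : List α}
    {w : List Bool} {x y : α} (hxy : x < y) (hx : x ∈ ν) (hy : y ∈ ν)
    (h : OrdEquiv (ν.filter (· ∈ ({x, y} : Finset α))) w) :
    ν.filter (· ∈ ({x, y} : Finset α)) = w.map (cond · y x) :=
  eq_map_cond_of_ordEquiv hxy (fun z hz => by simpa using List.of_mem_filter hz)
    (List.mem_filter.mpr ⟨hx, by simp⟩) (List.mem_filter.mpr ⟨hy, by simp⟩) h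

theorem IsRegularSeq.ordEquiv_filter_pair {n : ℕ} {ν : List ℕ} {w : List Bool}
    (hν : IsRegularSeq n ν) (h : OrdEquiv (ν.filter (· ∈ ({1, 2} : Finset ℕ))) w) {x y : ℕ}
    (hx : 1 ≤ x) (hxy : x < y) (hy : y ≤ n) : OrdEquiv (ν.filter (· ∈ ({x, y} : Finset ℕ))) w := by
  have hsub : ∀ {x y : ℕ}, 1 ≤ x → x < y → y ≤ n → ({x, y} : Finset ℕ) ⊆ Finset.Icc 1 n := by
    intro x y hx hxy hy
    simp only [Finset.insert_subset_iff, Finset.singleton_subset_iff, Finset.mem_Icc]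
    omega
  exact (hν.2.2 _ _ (hsub hx hxy hy) (hsub le_rfl one_lt_two (by linarith [hν.1]))
    (Finset.card_pair hxy.ne) (Finset.card_pair one_lt_two.ne)).trans h

theorem balancedOn_of_isRegularSeq {n : ℕ} {ν : List ℕ} {w : List Bool} (hν : IsRegularSeq n ν)
    (h : OrdEquiv (ν.filter (· ∈ ({1, 2} : Finset ℕ))) w) : BalancedOn false true w := by
  have hn := hν.1
  have hpair {x y : ℕ} := hν.ordEquiv_filter_pair h (x := x) (y := y)
  have hlen : ∀ x y, 1 ≤ x → x < y → y ≤ n → ν.count x + ν.count y = w.length := by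
    intro x y hx hxy hy
    rw [← length_filter_mem_pair hxy.ne]
    exact (hpair hx hxy hy).1
  have h12 := hlen 1 2 le_rfl one_lt_two (by omega)
  have h13 := hlen 1 3 le_rfl (by norm_num) hn
  have h23 := hlen 2 3 one_le_two (by norm_num) hn
  rcases Nat.eq_zero_or_pos (ν.count 1) with h0 | h1pos
  · rw [List.eq_nil_of_length_eq_zero (by omega : w.length = 0)]
    exact .nil
  have hmem : ∀ x, 1 ≤ x → x ≤ 3 → x ∈ ν := by
    intro x hx₁ hx₃
    rw [← List.count_pos_iff]
    interval_cases x <;> omega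
  have hmap : ∀ x y, 1 ≤ x → x < y → y ≤ 3 →
      ν.filter (· ∈ ({x, y} : Finset ℕ)) = w.map (cond · y x) := fun x y hx hxy hy =>
    filter_pair_eq_map_of_ordEquiv hxy (hmem x hx (by omega)) (hmem y (by omega) hy)
      (hpair hx hxy (by omega))
  have h₁₂ := hmap 1 2 le_rfl one_lt_two (by norm_num)
  refine balancedOn_of_count_eq_of_not_cyclicTriple w ?_
    (not_cyclicTriple_of_filter_eq_map (by norm_num) (by norm_num) (by norm_num) h₁₂
      (hmap 2 3 one_le_two (by norm_num) le_rfl) (hmap 1 3 le_rfl (by norm_num) le_rfl))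
  rw [count_eq_of_filter_eq_map one_lt_two.ne h₁₂, count_eq_of_filter_eq_map one_lt_two.ne h₁₂]
  simp only [cond_false, cond_true]
  omega

theorem filter_range'_mem_pair {n x y : ℕ} (hx : 1 ≤ x) (hxy : x < y) (hy : y ≤ n) :
    (List.range' 1 n).filter (· ∈ ({x, y} : Finset ℕ)) = [x, y] :=
  ((List.pairwise_lt_range' 1).filter _).eq_of_mem_iff (by simpa using hxy) fun z => by
    simp only [List.mem_filter, List.mem_range'_1, Finset.mem_insert, Finset.mem_singleton,
      decide_eq_true_eq, List.mem_cons, List.not_mem_nil, or_false]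
    omega

theorem filter_flatMap_replicate {α : Type*} (p : α → Bool) (r : ℕ) (l : List α) :
    (l.flatMap (List.replicate r)).filter p = (l.filter p).flatMap (List.replicate r) := by
  induction l with
  | nil => rfl
  | cons a l ih =>
    by_cases ha : p a <;> simp [ha, ih]

theorem BalancedOn.exists_filter_pair_eq_map {w : List Bool} (hw : BalancedOn false true w)
    (n : ℕ) : ∃ ν : List ℕ, (∀ z ∈ ν, z ∈ Finset.Icc 1 n) ∧ ∀ x y, 1 ≤ x → x < y → y ≤ n →
      ν.filter (· ∈ ({x, y} : Finset ℕ)) = w.map (cond · y x) := by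
  induction hw with
  | nil => exact ⟨[], by simp, fun _ _ _ _ _ => rfl⟩
  | lo r w _ _ ih =>
    obtain ⟨ν, hmem, hν⟩ := ih
    refine ⟨(List.range' 1 n).flatMap (List.replicate r) ++ ν, ?_, fun x y hx hxy hy => ?_⟩
    · simp only [List.mem_append, List.mem_flatMap, List.mem_range'_1, List.mem_replicate]
      rintro z (⟨a, ha, -, rfl⟩ | hz)
      · rw [Finset.mem_Icc]; omega
      · exact hmem z hz
    · rw [List.filter_append, filter_flatMap_replicate, filter_range'_mem_pair hx hxy hy,
        hν x y hx hxy hy]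
      simp
  | hi r w _ _ ih =>
    obtain ⟨ν, hmem, hν⟩ := ih
    refine ⟨(List.range' 1 n).reverse.flatMap (List.replicate r) ++ ν, ?_,
      fun x y hx hxy hy => ?_⟩
    · simp only [List.mem_append, List.mem_flatMap, List.mem_reverse, List.mem_range'_1,
        List.mem_replicate]
      rintro z (⟨a, ha, -, rfl⟩ | hz)
      · rw [Finset.mem_Icc]; omega
      · exact hmem z hz
    · rw [List.filter_append, filter_flatMap_replicate, List.filter_reverse,
        filter_range'_mem_pair hx hxy hy, hν x y hx hxy hy]
      simp

theorem Finset.exists_lt_and_eq_pair_of_card_eq_two {α : Type*} [LinearOrder α] {X : Finset α}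
    (hX : X.card = 2) : ∃ x y, x < y ∧ X = {x, y} := by
  obtain ⟨a, b, hab, rfl⟩ := Finset.card_eq_two.mp hX
  rcases hab.lt_or_gt with h | h
  · exact ⟨a, b, h, rfl⟩
  · exact ⟨b, a, h, Finset.pair_comm a b⟩

theorem isRegularSeq_of_filter_pair_eq_map {n : ℕ} (hn : 3 ≤ n) {ν : List ℕ} {w : List Bool}
    (hmem : ∀ z ∈ ν, z ∈ Finset.Icc 1 n)
    (hν : ∀ x y, 1 ≤ x → x < y → y ≤ n → ν.filter (· ∈ ({x, y} : Finset ℕ)) = w.map (cond · y x)) :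
    IsRegularSeq n ν := by
  have hpair : ∀ X : Finset ℕ, X ⊆ Finset.Icc 1 n → X.card = 2 →
      OrdEquiv (ν.filter (· ∈ X)) w := by
    intro X hX hcard
    obtain ⟨x, y, hxy, rfl⟩ := Finset.exists_lt_and_eq_pair_of_card_eq_two hcard
    simp only [Finset.insert_subset_iff, Finset.singleton_subset_iff, Finset.mem_Icc] at hX
    rw [hν x y hX.1.1 hxy hX.2.2]
    exact ordEquiv_map_self (strictMono_cond hxy) w
  exact ⟨hn, hmem, fun X Y hX hY hXc hYc => (hpair X hX hXc).trans (hpair Y hY hYc).symm⟩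

/-- **Proposition.** For `n ≥ 3` and a word `w` on `{a ≺ b}` (here `a = false`,
`b = true`), there is a regular sequence on `[n]` whose restriction to `{1,2}` is
order equivalent to `w` iff `w` is balanced. -/
theorem exists_regularSeq_iff_balanced (n : ℕ) (hn : 3 ≤ n) (w : List Bool) :
    (∃ ν : List ℕ, IsRegularSeq n ν ∧
        OrdEquiv (ν.filter (· ∈ ({1, 2} : Finset ℕ))) w) ↔
      BalancedOn false true w := by
  refine ⟨fun ⟨ν, hν, h⟩ => balancedOn_of_isRegularSeq hν h, fun hw => ?_⟩
  obtain ⟨ν, hmem, hν⟩ := hw.exists_filter_pair_eq_map n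
  refine ⟨ν, isRegularSeq_of_filter_pair_eq_map hn hmem hν, ?_⟩
  rw [hν 1 2 le_rfl one_lt_two (by omega)]
  exact ordEquiv_map_self (strictMono_cond one_lt_two) w

end
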